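/- arXiv:2204.13542 — 8 statements merged into one kernel-verified Lean document; each statement's English description precedes it below -/
import Mathlib

section
/- For any Furstenberg family 𝓕, the block family operation is idempotent: b(b𝓕) = b𝓕. -/
/-- The block family of a family of subsets of ℕ. -/
def blockFamily (F : Set (Set ℕ)) : Set (Set ℕ) :=
  {S | ∃ A ∈ F, ∀ R : Finset ℕ, ↑R ⊆ A → ∃ n, ∀ r ∈ R, r + n ∈ S}

theorem subset_blockFamily (F : Set (Set ℕ)) : F ⊆ blockFamily F :=
  fun A hA => ⟨A, hA, fun _ hR => ⟨0, fun _ hr => hR hr⟩⟩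

/-- A translate by `n` of a translate by `m` of `R` is a translate of `R` by `m + n`. -/
theorem blockFamily_blockFamily_subset (F : Set (Set ℕ)) :
    blockFamily (blockFamily F) ⊆ blockFamily F := by
  rintro S ⟨B, ⟨A, hA, hAB⟩, hBS⟩
  refine ⟨A, hA, fun R hR => ?_⟩
  obtain ⟨m, hm⟩ := hAB R hR
  have hRm : ↑(R.image (· + m)) ⊆ B := by
    rw [Finset.coe_image]
    rintro _ ⟨r, hr, rfl⟩
    exact hm r hr
  obtain ⟨n, hn⟩ := hBS _ hRm
  exact ⟨m + n, fun r hr => add_assoc r m n ▸ hn (r + m) (Finset.mem_image_of_mem _ hr)⟩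

theorem blockFamily_idem_general (F : Set (Set ℕ)) :
    blockFamily (blockFamily F) = blockFamily F :=
  (blockFamily_blockFamily_subset F).antisymm (subset_blockFamily _)

theorem blockFamily_idem (F : Set (Set ℕ))
    (hF : ∀ A ∈ F, ∀ B : Set ℕ, A ⊆ B → B ∈ F) :
    blockFamily (blockFamily F) = blockFamily F :=
  blockFamily_idem_general F
end

section
/- If A ⊆ ℕ belongs to the block family of the family of sets with positive upper density, then A has positive upper Banach density. That is, b(upper density) ⊆ upper Banach density. -/
open Classical in
/-- The upper density of a set of natural numbers. -/
noncomputable def upperDensity (A : Set ℕ) : ℝ :=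
  Filter.limsup (fun n => (((Finset.Icc 1 n).filter (· ∈ A)).card : ℝ) / n) Filter.atTop

open Classical in
/-- The upper Banach density of a set of natural numbers. -/
noncomputable def upperBanachDensity (A : Set ℕ) : ℝ :=
  Filter.limsup
    (fun n => ⨆ k : ℕ, (((Finset.Icc k (k + n)).filter (· ∈ A)).card : ℝ) / (n + 1))
    Filter.atTop

/-!
If `B` has upper density `d > 0`, then for infinitely many `m` the initial segment `[1, m]`
contains at least `d m / 2` elements of `B`. Since `A` contains a translate of each of these
finite sets, some window of length `m` meets `A` in at least `d m / 2` points, so the upper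
Banach density of `A` is at least `d / 2`.
-/

open Filter Finset

open Classical in
noncomputable def initialRatio (A : Set ℕ) (n : ℕ) : ℝ :=
  (((Icc 1 n).filter (· ∈ A)).card : ℝ) / n

open Classical in
noncomputable def windowRatio (A : Set ℕ) (n k : ℕ) : ℝ :=
  (((Icc k (k + n)).filter (· ∈ A)).card : ℝ) / (n + 1)

lemma upperDensity_eq_limsup_initialRatio (A : Set ℕ) :
    upperDensity A = limsup (initialRatio A) atTop := rfl

lemma upperBanachDensity_eq_limsup_iSup_windowRatio (A : Set ℕ) :
    upperBanachDensity A = limsup (fun n => ⨆ k, windowRatio A n k) atTop := rfl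

lemma windowRatio_le_one (A : Set ℕ) (n k : ℕ) : windowRatio A n k ≤ 1 := by
  classical
  rw [windowRatio, div_le_one (by positivity)]
  have hcard : ((Icc k (k + n)).filter (· ∈ A)).card ≤ n + 1 :=
    (card_filter_le _ _).trans (by rw [Nat.card_Icc]; omega)
  exact_mod_cast hcard

lemma bddAbove_range_windowRatio (A : Set ℕ) (n : ℕ) : BddAbove (Set.range (windowRatio A n)) :=
  ⟨1, by rintro _ ⟨k, rfl⟩; exact windowRatio_le_one A n k⟩

lemma card_filter_Icc_le_card_filter_Icc_add {A B : Set ℕ} [DecidablePred (· ∈ A)]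
    [DecidablePred (· ∈ B)] {a b t : ℕ} (ht : ∀ r ∈ (Icc a b).filter (· ∈ B), r + t ∈ A) :
    ((Icc a b).filter (· ∈ B)).card ≤ ((Icc (a + t) (b + t)).filter (· ∈ A)).card := by
  refine card_le_card_of_injOn (· + t) (fun r hr => ?_) (add_left_injective t).injOn
  have hr_Icc := mem_Icc.mp (mem_filter.mp hr).1
  exact mem_filter.mpr ⟨mem_Icc.mpr (by dsimp only; omega), ht r hr⟩

open Classical in
lemma initialRatio_le_windowRatio_of_translate {A B : Set ℕ} {m t : ℕ} (hm : 1 ≤ m)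
    (ht : ∀ r ∈ (Icc 1 m).filter (· ∈ B), r + t ∈ A) :
    initialRatio B m ≤ windowRatio A (m - 1) (1 + t) := by
  have hlen : ((m - 1 : ℕ) : ℝ) + 1 = m := by rw [Nat.cast_sub hm]; ring
  have hend : 1 + t + (m - 1) = m + t := by omega
  rw [initialRatio, windowRatio, hlen, hend]
  gcongr ?_ / _
  exact_mod_cast card_filter_Icc_le_card_filter_Icc_add ht

open Classical in
lemma initialRatio_le_iSup_windowRatio {A B : Set ℕ}
    (hAB : ∀ R : Finset ℕ, ↑R ⊆ B → ∃ n, ∀ r ∈ R, r + n ∈ A) {m : ℕ} (hm : 1 ≤ m) :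
    initialRatio B m ≤ ⨆ k, windowRatio A (m - 1) k := by
  obtain ⟨t, ht⟩ := hAB ((Icc 1 m).filter (· ∈ B)) fun r hr => (mem_filter.mp hr).2
  exact (initialRatio_le_windowRatio_of_translate hm ht).trans
    (le_ciSup (bddAbove_range_windowRatio A _) _)

lemma frequently_lt_initialRatio {B : Set ℕ} {c : ℝ} (hc : c < upperDensity B) :
    ∃ᶠ m in atTop, c < initialRatio B m := by
  rw [upperDensity_eq_limsup_initialRatio] at hc
  exact frequently_lt_of_lt_limsup
    (isBoundedUnder_of ⟨0, fun m => by unfold initialRatio; positivity⟩).isCoboundedUnder_le hc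

lemma le_upperBanachDensity_of_frequently {A : Set ℕ} {c : ℝ}
    (h : ∃ᶠ n in atTop, c ≤ ⨆ k, windowRatio A n k) : c ≤ upperBanachDensity A := by
  rw [upperBanachDensity_eq_limsup_iSup_windowRatio]
  exact le_limsup_of_frequently_le h
    (isBoundedUnder_of ⟨1, fun n => ciSup_le (windowRatio_le_one A n)⟩)

theorem blockFamily_upperDensity_subset_upperBanachDensity (A : Set ℕ)
    (hA : A ∈ blockFamily {B : Set ℕ | 0 < upperDensity B}) :
    0 < upperBanachDensity A := by
  obtain ⟨B, hB, hAB⟩ := hA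
  have hB : 0 < upperDensity B := hB
  have hfreq : ∃ᶠ m in atTop, upperDensity B / 2 ≤ ⨆ k, windowRatio A (m - 1) k :=
    ((frequently_lt_initialRatio (half_lt_self hB)).and_eventually (eventually_ge_atTop 1)).mono
      fun m ⟨hlt, hm⟩ => hlt.le.trans (initialRatio_le_iSup_windowRatio hAB hm)
  exact (half_pos hB).trans_le
    (le_upperBanachDensity_of_frequently ((tendsto_sub_atTop_nat 1).frequently hfreq))
end

section
/- The block family of the family of syndetic subsets of ℕ is contained in the family of piecewise syndetic sets: if A ∈ b(Syn) then A is piecewise syndetic. -/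
/-!
If every gap of `F` is at most `b`, the finitely many elements of `F` below `L + b` meet every
window `[i, i + b]` with `i ≤ L`. A translate of this finite set by `n` lies in `A`, so every point
of `[n + b, n + b + L]` lies at most `b` above an element of `A`, i.e. in `⋃_{j ≤ b} (A + j)`.
-/

/-- A subset of ℕ is thick if it contains arbitrarily long intervals. -/
def Thick (A : Set ℕ) : Prop := ∀ L : ℕ, ∃ a : ℕ, ∀ i ≤ L, a + i ∈ A

/-- A subset of ℕ is syndetic if it has bounded gaps. -/
def Syndetic (A : Set ℕ) : Prop := ∃ b : ℕ, ∀ n : ℕ, ∃ m ∈ A, n ≤ m ∧ m ≤ n + b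

/-- A subset of ℕ is piecewise syndetic if finitely many translates cover a thick set. -/
def PiecewiseSyndetic (A : Set ℕ) : Prop :=
  ∃ b : ℕ, Thick (⋃ i ∈ Set.Iic b, (fun a => a + i) '' A)

lemma mem_biUnion_Iic_add_image_iff {A : Set ℕ} {b x : ℕ} :
    x ∈ ⋃ j ∈ Set.Iic b, (fun a => a + j) '' A ↔ ∃ a ∈ A, a ≤ x ∧ x ≤ a + b := by
  simp only [Set.mem_iUnion, Set.mem_Iic, Set.mem_image, exists_prop]
  constructor
  · rintro ⟨j, hj, a, ha, rfl⟩
    exact ⟨a, ha, by omega, by omega⟩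
  · rintro ⟨a, ha, hax, hxa⟩
    exact ⟨x - a, by omega, a, ha, by omega⟩

lemma exists_finset_subset_forall_window {F : Set ℕ} {b : ℕ}
    (hF : ∀ n, ∃ m ∈ F, n ≤ m ∧ m ≤ n + b) (L : ℕ) :
    ∃ R : Finset ℕ, ↑R ⊆ F ∧ ∀ i ≤ L, ∃ r ∈ R, i ≤ r ∧ r ≤ i + b := by
  classical
  refine ⟨(Finset.range (L + b + 1)).filter (· ∈ F),
    fun r hr => (Finset.mem_filter.1 hr).2, fun i hi => ?_⟩
  obtain ⟨m, hmF, him, hmi⟩ := hF i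
  exact ⟨m, Finset.mem_filter.2 ⟨Finset.mem_range.2 (by omega), hmF⟩, him, hmi⟩

theorem blockFamily_syndetic_subset_piecewiseSyndetic (A : Set ℕ)
    (hA : A ∈ blockFamily {F : Set ℕ | Syndetic F}) :
    PiecewiseSyndetic A := by
  obtain ⟨F, ⟨b, hb⟩, hTranslate⟩ := hA
  refine ⟨b, fun L => ?_⟩
  obtain ⟨R, hRF, hR⟩ := exists_finset_subset_forall_window hb L
  obtain ⟨n, hn⟩ := hTranslate R hRF
  refine ⟨n + b, fun i hi => mem_biUnion_Iic_add_image_iff.2 ?_⟩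
  obtain ⟨r, hrR, hir, hri⟩ := hR i hi
  exact ⟨r + n, hn r hrR, by omega, by omega⟩
end

section
/- Every piecewise syndetic subset of ℕ belongs to the block family of the syndetic sets: if A is piecewise syndetic, then there exists a syndetic set F such that every finite subset of F has a translate contained in A. -/
/-!
Pick, for every `L`, a block `a L + [0, L]` lying in the union of the translates `A + i`, `i ≤ b`;
shifted back by `a L`, the set `A` meets every window `[n, n + b]` inside `[0, L]`. Let `F` be the
limit of the shifted sets `A - a L` along a nonprincipal ultrafilter. Each window is finite, so one
of its points lies in `F`, and `F` is syndetic; a finite subset of `F` lies in `A - a L` for some `L`.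
-/

open Filter

theorem exists_finset_subset_of_eventually_mem {ι α : Type*} {f : Filter ι} [f.NeBot]
    (S : ι → Set α) (R : Finset α) (hR : ∀ x ∈ R, ∀ᶠ i in f, x ∈ S i) : ∃ i, ↑R ⊆ S i :=
  ((eventually_all_finset R).mpr hR).exists

theorem syndetic_setOf_eventually_mem {ι : Type*} (U : Ultrafilter ι) (S : ι → Set ℕ) (b : ℕ)
    (h : ∀ n, ∀ᶠ i in U, ∃ m ∈ Set.Icc n (n + b), m ∈ S i) :
    Syndetic {m | ∀ᶠ i in U, m ∈ S i} := by
  refine ⟨b, fun n => ?_⟩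
  obtain ⟨m, ⟨hnm, hmb⟩, hm⟩ :=
    (U.eventually_exists_mem_iff (Set.finite_Icc n (n + b))).mp (h n)
  exact ⟨m, hm, hnm, hmb⟩

theorem Thick.exists_shift_meets_Icc {A : Set ℕ} {b : ℕ}
    (h : Thick (⋃ i ∈ Set.Iic b, (fun a => a + i) '' A)) (L : ℕ) :
    ∃ a, ∀ n, n + b ≤ L → ∃ m ∈ Set.Icc n (n + b), a + m ∈ A := by
  obtain ⟨a, ha⟩ := h L
  refine ⟨a, fun n hn => ?_⟩
  have hcover := ha (n + b) hn
  simp only [Set.mem_iUnion, Set.mem_image, Set.mem_Iic, exists_prop] at hcover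
  obtain ⟨j, hjb, x, hxA, hxj⟩ := hcover
  refine ⟨n + b - j, ⟨by omega, by omega⟩, ?_⟩
  rwa [show a + (n + b - j) = x by omega]

theorem piecewiseSyndetic_mem_blockFamily_syndetic (A : Set ℕ)
    (hA : PiecewiseSyndetic A) :
    ∃ F : Set ℕ, Syndetic F ∧ ∀ R : Finset ℕ, ↑R ⊆ F → ∃ n, ∀ r ∈ R, r + n ∈ A := by
  obtain ⟨b, hb⟩ := hA
  choose a ha using hb.exists_shift_meets_Icc
  let S : ℕ → Set ℕ := fun L => {m | a L + m ∈ A}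
  refine ⟨{m | ∀ᶠ L in hyperfilter ℕ, m ∈ S L}, ?_, fun R hR => ?_⟩
  · refine syndetic_setOf_eventually_mem _ S b fun n => ?_
    have h_large : ∀ᶠ L in hyperfilter ℕ, n + b ≤ L :=
      (eventually_ge_atTop _).filter_mono (Nat.cofinite_eq_atTop ▸ hyperfilter_le_cofinite)
    exact h_large.mono fun L hL => ha L n hL
  · obtain ⟨L, hL⟩ := exists_finset_subset_of_eventually_mem S R fun r hr => hR hr
    exact ⟨a L, fun r hr => add_comm (a L) r ▸ hL hr⟩
end

section
/- The block family of the family of sets containing an infinite arithmetic progression equals the family of sets containing arbitrarily long arithmetic progressions with bounded common difference: b(IAP) = APb. -/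
/-- The family of sets containing an infinite arithmetic progression. -/
def IAP : Set (Set ℕ) :=
  {A | ∃ a d : ℕ, 1 ≤ d ∧ ∀ k : ℕ, a + k * d ∈ A}

/-- The family of sets containing arbitrarily long arithmetic progressions
with bounded common difference. -/
def APb : Set (Set ℕ) :=
  {A | ∃ d : ℕ, 1 ≤ d ∧ ∀ L : ℕ, ∃ a d' : ℕ, 1 ≤ d' ∧ d' ≤ d ∧ ∀ k < L, a + k * d' ∈ A}

lemma mem_APb_of_mem_blockFamily_IAP {S : Set ℕ} (hS : S ∈ blockFamily IAP) : S ∈ APb := by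
  obtain ⟨A, ⟨a, d, hd, hA⟩, hblock⟩ := hS
  refine ⟨d, hd, fun L => ?_⟩
  have hsegment : ↑((Finset.range L).image (a + · * d)) ⊆ A := by
    rw [Finset.coe_image]
    rintro _ ⟨k, -, rfl⟩
    exact hA k
  obtain ⟨n, hn⟩ := hblock _ hsegment
  refine ⟨a + n, d, hd, le_rfl, fun k hk => ?_⟩
  rw [add_right_comm]
  exact hn _ (Finset.mem_image_of_mem _ (Finset.mem_range.mpr hk))

lemma setOf_dvd_mem_IAP {m : ℕ} (hm : 1 ≤ m) : {x | m ∣ x} ∈ IAP :=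
  ⟨0, m, hm, fun k => ⟨k, by ring⟩⟩

lemma exists_lt_eq_mul_of_dvd {d r L : ℕ} (hd : 1 ≤ d) (hdr : d ∣ r) (hrL : r < L) :
    ∃ k < L, r = k * d := by
  obtain ⟨k, rfl⟩ := hdr
  exact ⟨k, lt_of_le_of_lt (Nat.le_mul_of_pos_left k hd) hrL, mul_comm d k⟩

lemma mem_blockFamily_IAP_of_mem_APb {S : Set ℕ} (hS : S ∈ APb) : S ∈ blockFamily IAP := by
  obtain ⟨d, hd, hprog⟩ := hS
  refine ⟨{x | d.factorial ∣ x}, setOf_dvd_mem_IAP (Nat.factorial_pos d), fun R hR => ?_⟩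
  obtain ⟨a, d', hd', hd'd, hmem⟩ := hprog (R.sup id + 1)
  refine ⟨a, fun r hr => ?_⟩
  have hdvd : d' ∣ r := (Nat.dvd_factorial hd' hd'd).trans (hR hr)
  have hrL : r < R.sup id + 1 := Nat.lt_succ_of_le (Finset.le_sup (f := id) hr)
  obtain ⟨k, hk, rfl⟩ := exists_lt_eq_mul_of_dvd hd' hdvd hrL
  rw [add_comm]
  exact hmem k hk

theorem blockFamily_IAP_eq_APb : blockFamily IAP = APb :=
  Set.Subset.antisymm (fun _ => mem_APb_of_mem_blockFamily_IAP)
    (fun _ => mem_blockFamily_IAP_of_mem_APb)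
end

section
/- Let T be a continuous linear operator on a topological vector space X (or more generally a continuous self-map of a topological space), let 𝓕 be a Furstenberg family with block family b𝓕. If T is hypercyclic and for every nonempty open set U there exists x with N(x,U) = {n : Tⁿx ∈ U} ∈ 𝓕, then every hypercyclic vector x satisfies N(x,U) ∈ b𝓕 for every nonempty open set U. In particular, if 𝓕 is a block family (b𝓕 = 𝓕), then T hypercyclic with the 𝓟_𝓕 property implies T is 𝓕-hypercyclic. -/
section

variable {X : Type*} [TopologicalSpace X] {T : X → X}

theorem isOpen_biInter_preimage_iterate (hT : Continuous T) {U : Set X} (hU : IsOpen U)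
    (R : Finset ℕ) : IsOpen (⋂ r ∈ R, T^[r] ⁻¹' U) :=
  isOpen_biInter_finset fun r _ => (hT.iterate r).isOpen_preimage U hU

theorem exists_translate_subset_returnSet_of_denseRange (hT : Continuous T) {x : X}
    (hx : Dense (Set.range fun n => T^[n] x)) {U : Set X} (hU : IsOpen U) {y : X}
    {R : Finset ℕ} (hR : ∀ r ∈ R, T^[r] y ∈ U) : ∃ n, ∀ r ∈ R, T^[r + n] x ∈ U := by
  have hy : y ∈ ⋂ r ∈ R, T^[r] ⁻¹' U := Set.mem_iInter₂.2 hR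
  obtain ⟨_, ⟨n, rfl⟩, hn⟩ :=
    hx.exists_mem_open (isOpen_biInter_preimage_iterate hT hU R) ⟨y, hy⟩
  refine ⟨n, fun r hr => ?_⟩
  rw [Function.iterate_add_apply]
  exact Set.mem_iInter₂.1 hn r hr

theorem returnSet_mem_blockFamily_of_denseRange (hT : Continuous T) {F : Set (Set ℕ)} {x : X}
    (hx : Dense (Set.range fun n => T^[n] x)) {U : Set X} (hU : IsOpen U) {y : X}
    (hy : {n : ℕ | T^[n] y ∈ U} ∈ F) : {n : ℕ | T^[n] x ∈ U} ∈ blockFamily F :=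
  ⟨_, hy, fun _ hR => exists_translate_subset_returnSet_of_denseRange hT hx hU hR⟩

end

theorem hypercyclic_and_PF_implies_bF_hypercyclic_general
    {X : Type*} [TopologicalSpace X] (T : X → X) (hT : Continuous T)
    (F : Set (Set ℕ))
    (hhc : ∃ x : X, Dense (Set.range fun n => T^[n] x))
    (hPF : ∀ U : Set X, IsOpen U → U.Nonempty → ∃ y : X, {n : ℕ | T^[n] y ∈ U} ∈ F) :
    (∀ x : X, Dense (Set.range fun n => T^[n] x) →
      ∀ U : Set X, IsOpen U → U.Nonempty → {n : ℕ | T^[n] x ∈ U} ∈ blockFamily F) ∧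
    (blockFamily F = F →
      ∃ x : X, Dense (Set.range fun n => T^[n] x) ∧
        ∀ U : Set X, IsOpen U → U.Nonempty → {n : ℕ | T^[n] x ∈ U} ∈ F) := by
  have hblock : ∀ x : X, Dense (Set.range fun n => T^[n] x) →
      ∀ U : Set X, IsOpen U → U.Nonempty → {n : ℕ | T^[n] x ∈ U} ∈ blockFamily F := by
    intro x hx U hU hUne
    obtain ⟨y, hy⟩ := hPF U hU hUne
    exact returnSet_mem_blockFamily_of_denseRange hT hx hU hy
  refine ⟨hblock, fun hbF => ?_⟩
  obtain ⟨x, hx⟩ := hhc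
  exact ⟨x, hx, fun U hU hUne => hbF ▸ hblock x hx U hU hUne⟩

theorem hypercyclic_and_PF_implies_bF_hypercyclic
    {X : Type*} [TopologicalSpace X] (T : X → X) (hT : Continuous T)
    (F : Set (Set ℕ)) (hF : ∀ A ∈ F, ∀ B : Set ℕ, A ⊆ B → B ∈ F)
    (hhc : ∃ x : X, Dense (Set.range fun n => T^[n] x))
    (hPF : ∀ U : Set X, IsOpen U → U.Nonempty → ∃ y : X, {n : ℕ | T^[n] y ∈ U} ∈ F) :
    (∀ x : X, Dense (Set.range fun n => T^[n] x) →
      ∀ U : Set X, IsOpen U → U.Nonempty → {n : ℕ | T^[n] x ∈ U} ∈ blockFamily F) ∧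
    (blockFamily F = F →
      ∃ x : X, Dense (Set.range fun n => T^[n] x) ∧
        ∀ U : Set X, IsOpen U → U.Nonempty → {n : ℕ | T^[n] x ∈ U} ∈ F) :=
  hypercyclic_and_PF_implies_bF_hypercyclic_general T hT F hhc hPF
end

section
/- Let 𝓕 be an upper Furstenberg family with decomposition 𝓕 = ⋃_{δ∈D} ⋂_{m∈M} 𝓕_{δ,m} where each 𝓕_{δ,m} is finitely hereditarily upward, and suppose each 𝓕_{δ,m} is translation invariant (A ∈ 𝓕_{δ,m} ⟹ A + k ∈ 𝓕_{δ,m}). Then A ∈ 𝓕 if and only if there exist δ ∈ D, natural numbers k_m, and finite sets R_m ∈ 𝓕_{δ,m} with k_m + R_m ⊆ A for every m ∈ M. -/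
def FinitelyHereditarilyUpward {α : Type*} (𝒢 : Set (Set α)) : Prop :=
  ∀ A ∈ 𝒢, ∃ F : Finset α, ∀ B : Set α, (↑F ∩ A : Set α) ⊆ B → B ∈ 𝒢

namespace FinitelyHereditarilyUpward

variable {α : Type*} {𝒢 : Set (Set α)} {A B : Set α}

theorem mem_of_superset (h𝒢 : FinitelyHereditarilyUpward 𝒢) (hA : A ∈ 𝒢) (hAB : A ⊆ B) :
    B ∈ 𝒢 := by
  obtain ⟨F, hF⟩ := h𝒢 A hA
  exact hF B (Set.inter_subset_right.trans hAB)

theorem exists_finset_subset_mem (h𝒢 : FinitelyHereditarilyUpward 𝒢) (hA : A ∈ 𝒢) :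
    ∃ R : Finset α, ↑R ⊆ A ∧ ↑R ∈ 𝒢 := by
  obtain ⟨F, hF⟩ := h𝒢 A hA
  have hfin : (↑F ∩ A : Set α).Finite := F.finite_toSet.inter_of_left A
  refine ⟨hfin.toFinset, ?_, hF _ ?_⟩ <;> rw [hfin.coe_toFinset]
  exact Set.inter_subset_right

end FinitelyHereditarilyUpward

theorem upper_family_mem_iff_finite_blocks_general
    {D M : Type*} (Fdm : D → M → Set (Set ℕ))
    -- each 𝓕_{δ,m} is finitely hereditarily upward
    (hfin : ∀ (δ : D) (m : M), ∀ A ∈ Fdm δ m,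
      ∃ F : Finset ℕ, ∀ B : Set ℕ, (↑F ∩ A : Set ℕ) ⊆ B → B ∈ Fdm δ m)
    -- each 𝓕_{δ,m} is translation invariant
    (hinv : ∀ (δ : D) (m : M), ∀ A ∈ Fdm δ m, ∀ k : ℕ,
      (fun x => x + k) '' A ∈ Fdm δ m)
    (A : Set ℕ) :
    (∃ δ : D, ∀ m : M, A ∈ Fdm δ m) ↔
      (∃ (δ : D) (k : M → ℕ) (R : M → Finset ℕ),
        (∀ m, (↑(R m) : Set ℕ) ∈ Fdm δ m) ∧ ∀ m, ∀ r ∈ R m, k m + r ∈ A) := by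
  have hFHU : ∀ δ m, FinitelyHereditarilyUpward (Fdm δ m) := hfin
  constructor
  · rintro ⟨δ, hA⟩
    choose R hRA hR using fun m => (hFHU δ m).exists_finset_subset_mem (hA m)
    exact ⟨δ, 0, R, hR, fun m r hr => by simpa using hRA m hr⟩
  · rintro ⟨δ, k, R, hR, hRA⟩
    refine ⟨δ, fun m => (hFHU δ m).mem_of_superset (hinv δ m _ (hR m) (k m)) ?_⟩
    rintro _ ⟨r, hr, rfl⟩
    simpa [add_comm] using hRA m r hr

theorem upper_family_mem_iff_finite_blocks
    {D M : Type*} [Countable M] (Fdm : D → M → Set (Set ℕ))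
    -- each 𝓕_{δ,m} is finitely hereditarily upward
    (hfin : ∀ (δ : D) (m : M), ∀ A ∈ Fdm δ m,
      ∃ F : Finset ℕ, ∀ B : Set ℕ, (↑F ∩ A : Set ℕ) ⊆ B → B ∈ Fdm δ m)
    -- each 𝓕_{δ,m} is translation invariant
    (hinv : ∀ (δ : D) (m : M), ∀ A ∈ Fdm δ m, ∀ k : ℕ,
      (fun x => x + k) '' A ∈ Fdm δ m)
    (A : Set ℕ) :
    (∃ δ : D, ∀ m : M, A ∈ Fdm δ m) ↔
      (∃ (δ : D) (k : M → ℕ) (R : M → Finset ℕ),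
        (∀ m, (↑(R m) : Set ℕ) ∈ Fdm δ m) ∧ ∀ m, ∀ r ∈ R m, k m + r ∈ A) :=
  upper_family_mem_iff_finite_blocks_general Fdm hfin hinv A
end

section
/- Let X be a Banach space with a normalized unconditional Schauder basis (e_n)_{n≥1} on which the backward shift B (Be₁ = 0, Be_n = e_{n−1}) is bounded, and suppose B has the 𝓟_Syn property, i.e., for every nonempty open U there is x with {n : Bⁿx ∈ U} syndetic. Then Σ_n e_n converges in X (equivalently, B is chaotic). -/
open Filter Topology

theorem Summable.bddAbove_range_norm_finset_sum {ι E : Type*} [SeminormedAddCommGroup E]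
    [CompleteSpace E] {f : ι → E} (hf : Summable f) :
    BddAbove (Set.range fun s : Finset ι => ‖∑ i ∈ s, f i‖) := by
  classical
  obtain ⟨s₀, hs₀⟩ := summable_iff_vanishing_norm.1 hf 1 one_pos
  refine ⟨∑ i ∈ s₀, ‖f i‖ + 1, Set.forall_mem_range.2 fun s => ?_⟩
  rw [← Finset.sum_inter_add_sum_sdiff s s₀]
  refine (norm_add_le _ _).trans (add_le_add ?_ (hs₀ _ Finset.sdiff_disjoint).le)
  exact (norm_sum_le _ _).trans <| Finset.sum_le_sum_of_subset_of_nonneg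
    Finset.inter_subset_right fun _ _ _ => norm_nonneg _

section UniqueExpansion

variable {𝕜 ι X : Type*} [NontriviallyNormedField 𝕜] [NormedAddCommGroup X] [NormedSpace 𝕜 X]
  {e : ι → X} (he : ∀ x : X, ∃! a : ι → 𝕜, HasSum (fun i => a i • e i) x)

noncomputable def expansionCoeff (x : X) : ι → 𝕜 := (he x).exists.choose

theorem hasSum_expansionCoeff (x : X) : HasSum (fun i => expansionCoeff he x i • e i) x :=
  (he x).exists.choose_spec

theorem expansionCoeff_eq {x : X} {a : ι → 𝕜} (hx : HasSum (fun i => a i • e i) x) :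
    expansionCoeff he x = a :=
  (he x).unique (hasSum_expansionCoeff he x) hx

theorem expansionCoeff_add (x y : X) :
    expansionCoeff he (x + y) = expansionCoeff he x + expansionCoeff he y :=
  expansionCoeff_eq he <| by
    simpa [add_smul] using (hasSum_expansionCoeff he x).add (hasSum_expansionCoeff he y)

theorem expansionCoeff_smul (c : 𝕜) (x : X) :
    expansionCoeff he (c • x) = c • expansionCoeff he x :=
  expansionCoeff_eq he <| by
    simpa [smul_smul] using (hasSum_expansionCoeff he x).const_smul c

theorem expansionCoeff_basis [DecidableEq ι] (i : ι) : expansionCoeff he (e i) = Pi.single i 1 :=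
  expansionCoeff_eq he <| by
    convert hasSum_pi_single i (e i) using 1
    ext j
    rcases eq_or_ne j i with rfl | hj <;> simp [*]

include he in
theorem ne_zero_of_existsUnique_hasSum (i : ι) : e i ≠ 0 := by
  classical
  intro hi
  have h₀ : HasSum (fun j => (0 : ι → 𝕜) j • e j) 0 := by simp
  have h₁ : HasSum (fun j => (Pi.single i 1 : ι → 𝕜) j • e j) 0 := by
    convert h₀ using 2 with j
    rcases eq_or_ne j i with rfl | hj <;> simp [*]
  simpa using congrFun ((he 0).unique h₀ h₁) i

variable [CompleteSpace X]

noncomputable def expansionPartialSums : X →ₗ[𝕜] lp (fun _ : Finset ι => X) ⊤ where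
  toFun x := ⟨fun s => ∑ i ∈ s, expansionCoeff he x i • e i,
    memℓp_infty_iff.2 (hasSum_expansionCoeff he x).summable.bddAbove_range_norm_finset_sum⟩
  map_add' x y := by
    ext s
    simp only [lp.coeFn_add, Pi.add_apply, expansionCoeff_add, add_smul, Finset.sum_add_distrib]
  map_smul' c x := by
    ext s
    simp [expansionCoeff_smul, smul_smul, Finset.smul_sum]

theorem expansionPartialSums_apply (x : X) (s : Finset ι) :
    expansionPartialSums he x s = ∑ i ∈ s, expansionCoeff he x i • e i := rfl

variable [CompleteSpace 𝕜]

theorem continuous_expansionPartialSums : Continuous (expansionPartialSums he) := by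
  refine (expansionPartialSums he).continuous_of_seq_closed_graph fun u x y hu hy => ?_
  have hy_apply (s : Finset ι) :
      Tendsto (fun k => ∑ i ∈ s, expansionCoeff he (u k) i • e i) atTop (𝓝 (y s)) :=
    ((lp.evalCLM 𝕜 _ ⊤ s).continuous.tendsto y).comp hy
  have hy_single (i : ι) : y {i} ∈ Set.range fun d : 𝕜 => d • e i :=
    (isClosedEmbedding_smul_left (ne_zero_of_existsUnique_hasSum he i)).isClosed_range
      |>.mem_of_tendsto (hy_apply {i})
        (Eventually.of_forall fun k => ⟨expansionCoeff he (u k) i, by simp⟩)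
  choose d hd using hy_single
  have hy_eq (s : Finset ι) : y s = ∑ i ∈ s, d i • e i :=
    tendsto_nhds_unique (hy_apply s) <| tendsto_finsetSum s fun i _ => by
      simpa [← hd] using hy_apply {i}
  -- the partial sums of `u k` approximate those of `d` uniformly, and `u k` approximates `x`
  have hd_sum : HasSum (fun i => d i • e i) x := by
    refine Metric.tendsto_nhds.2 fun ε hε => ?_
    obtain ⟨k, hyk, hxk⟩ := ((Metric.tendsto_nhds.1 hy (ε / 3) (by positivity)).and
      (Metric.tendsto_nhds.1 hu (ε / 3) (by positivity))).exists
    filter_upwards [Metric.tendsto_nhds.1 (hasSum_expansionCoeff he (u k)) (ε / 3) (by positivity)]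
      with s hs
    have hys : dist (y s) (∑ i ∈ s, expansionCoeff he (u k) i • e i) < ε / 3 :=
      calc dist (y s) (expansionPartialSums he (u k) s)
          = ‖(y - expansionPartialSums he (u k)) s‖ := dist_eq_norm _ _
        _ ≤ dist y (expansionPartialSums he (u k)) :=
          (lp.norm_apply_le_norm ENNReal.top_ne_zero _ s).trans_eq (dist_eq_norm _ _).symm
        _ < ε / 3 := by rwa [dist_comm]
    calc dist (∑ i ∈ s, d i • e i) x
        ≤ dist (y s) (∑ i ∈ s, expansionCoeff he (u k) i • e i) + dist _ (u k) + dist (u k) x := by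
          rw [← hy_eq]; exact dist_triangle4 _ _ _ _
      _ < ε := by linarith
  ext s
  rw [hy_eq, expansionPartialSums_apply, expansionCoeff_eq he hd_sum]

noncomputable def expansionCoord (i : ι) : StrongDual 𝕜 X where
  toFun x := expansionCoeff he x i
  map_add' x y := by simp [expansionCoeff_add]
  map_smul' c x := by simp [expansionCoeff_smul]
  cont := by
    refine (isClosedEmbedding_smul_left (ne_zero_of_existsUnique_hasSum he i)).continuous_iff.2 ?_
    convert (lp.evalCLM 𝕜 _ ⊤ {i}).continuous.comp (continuous_expansionPartialSums he) using 1
    ext x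
    exact (Finset.sum_singleton (fun j => expansionCoeff he x j • e j) i).symm

theorem expansionCoord_apply (i : ι) (x : X) : expansionCoord he i x = expansionCoeff he x i :=
  rfl

end UniqueExpansion

section MultiplierBound

variable {ι X : Type*} [NormedAddCommGroup X] [NormedSpace ℝ X] {f : ι → X}

theorem norm_sum_smul_le_of_abs_le {c : ι → ℝ} {s : Finset ι} {M δ : ℝ} (hM : 0 ≤ M)
    (hc : ∀ i ∈ s, |c i| ≤ M) (hδ : ∀ t ⊆ s, ‖∑ i ∈ t, f i‖ ≤ δ) :
    ‖∑ i ∈ s, c i • f i‖ ≤ 2 * M * δ := by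
  classical
  have hδ₀ : 0 ≤ δ := by simpa using hδ ∅ (Finset.empty_subset s)
  -- test against functionals and split `s` according to the sign of `φ (f i)`
  refine NormedSpace.norm_le_dual_bound ℝ _ (by positivity) fun φ => ?_
  set sp := s.filter fun i => 0 ≤ φ (f i)
  set sn := s.filter fun i => ¬0 ≤ φ (f i)
  have hp : ∑ i ∈ sp, |φ (f i)| ≤ ‖φ‖ * δ := by
    rw [Finset.sum_congr rfl fun i hi => abs_of_nonneg (Finset.mem_filter.1 hi).2, ← map_sum]
    exact (le_abs_self _).trans ((φ.le_opNorm _).trans <| by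
      gcongr; exact hδ _ (Finset.filter_subset _ _))
  have hn : ∑ i ∈ sn, |φ (f i)| ≤ ‖φ‖ * δ := by
    rw [Finset.sum_congr rfl fun i hi => abs_of_neg (not_le.1 (Finset.mem_filter.1 hi).2),
      Finset.sum_neg_distrib, ← map_sum]
    exact (neg_le_abs _).trans ((φ.le_opNorm _).trans <| by
      gcongr; exact hδ _ (Finset.filter_subset _ _))
  calc ‖φ (∑ i ∈ s, c i • f i)‖ ≤ ∑ i ∈ s, |c i| * |φ (f i)| := by
        simpa [map_sum, abs_mul] using Finset.abs_sum_le_sum_abs (fun i => c i * φ (f i)) s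
    _ ≤ ∑ i ∈ s, M * |φ (f i)| := by
        gcongr with i hi; exact hc i hi
    _ = M * (∑ i ∈ sp, |φ (f i)| + ∑ i ∈ sn, |φ (f i)|) := by
        rw [Finset.sum_filter_add_sum_filter_not, Finset.mul_sum]
    _ ≤ 2 * M * δ * ‖φ‖ := by nlinarith

variable [CompleteSpace X]

theorem Summable.smul_of_abs_le (hf : Summable f) {c : ι → ℝ} {M : ℝ} (hc : ∀ i, |c i| ≤ M) :
    Summable fun i => c i • f i := by
  set K := |M| + 1
  have hK : 0 < K := by positivity
  refine summable_iff_vanishing_norm.2 fun ε hε => ?_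
  obtain ⟨s, hs⟩ := summable_iff_vanishing_norm.1 hf (ε / (4 * K)) (by positivity)
  refine ⟨s, fun t hts => ?_⟩
  calc ‖∑ i ∈ t, c i • f i‖ ≤ 2 * K * (ε / (4 * K)) :=
        norm_sum_smul_le_of_abs_le hK.le
          (fun i _ => (hc i).trans (by linarith [le_abs_self M]))
          fun u hu => (hs u (hts.mono_left hu)).le
    _ < ε := by field_simp; linarith

theorem Summable.of_smul_of_le_abs {c : ι → ℝ} (hf : Summable fun i => c i • f i) {δ : ℝ}
    (hδ : 0 < δ) (hc : ∀ i, δ ≤ |c i|) : Summable f := by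
  have hc₀ (i : ι) : c i ≠ 0 := abs_pos.1 (hδ.trans_le (hc i))
  refine (hf.smul_of_abs_le (c := fun i => (c i)⁻¹) (M := δ⁻¹) fun i => ?_).congr fun i => ?_
  · rw [abs_inv]; exact inv_anti₀ hδ (hc i)
  · rw [smul_smul, inv_mul_cancel₀ (hc₀ i), one_smul]

end MultiplierBound

section BackwardShift

variable {R M : Type*} [Ring R] [AddCommGroup M] [Module R M] [TopologicalSpace M]
  [IsTopologicalAddGroup M] {e : ℕ → M} {B : M →L[R] M}

theorem hasSum_backwardShift (hB0 : B (e 0) = 0) (hBs : ∀ n, B (e (n + 1)) = e n)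
    {a : ℕ → R} {x : M} (hx : HasSum (fun n => a n • e n) x) :
    HasSum (fun n => a (n + 1) • e n) (B x) := by
  simpa [hB0, hBs] using (hasSum_nat_add_iff' 1).2 (B.hasSum hx)

theorem hasSum_backwardShift_pow (hB0 : B (e 0) = 0) (hBs : ∀ n, B (e (n + 1)) = e n)
    {a : ℕ → R} {x : M} (hx : HasSum (fun n => a n • e n) x) (j : ℕ) :
    HasSum (fun n => a (n + j) • e n) ((B ^ j) x) := by
  induction j generalizing a x with
  | zero => simpa using hx
  | succ j ih =>
    rw [pow_succ, mul_apply_eq_comp]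
    simpa only [add_assoc] using ih (hasSum_backwardShift hB0 hBs hx)

end BackwardShift

theorem expansionCoeff_backwardShift_pow {𝕜 X : Type*} [NontriviallyNormedField 𝕜]
    [NormedAddCommGroup X] [NormedSpace 𝕜 X] {e : ℕ → X}
    (he : ∀ x : X, ∃! a : ℕ → 𝕜, HasSum (fun n => a n • e n) x) {B : X →L[𝕜] X}
    (hB0 : B (e 0) = 0) (hBs : ∀ n, B (e (n + 1)) = e n) (x : X) (j k : ℕ) :
    expansionCoeff he ((B ^ j) x) k = expansionCoeff he x (k + j) :=
  congrFun (expansionCoeff_eq he <|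
    hasSum_backwardShift_pow hB0 hBs (hasSum_expansionCoeff he x) j) k

theorem summable_of_syndetic_of_le_coeff {X : Type*} [NormedAddCommGroup X] [NormedSpace ℝ X]
    [CompleteSpace X] {e : ℕ → X} {B : X →L[ℝ] X} (hB0 : B (e 0) = 0)
    (hBs : ∀ n, B (e (n + 1)) = e n) {a : ℕ → ℝ} (ha : Summable fun n => a n • e n) {A : Set ℕ}
    (hA : Syndetic A) {δ : ℝ} (hδ : 0 < δ) (haA : ∀ n ∈ A, δ ≤ a n) : Summable e := by
  obtain ⟨b, hb⟩ := hA
  have hnonneg (n : ℕ) : 0 ≤ A.indicator a n :=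
    Set.indicator_nonneg (fun m hm => hδ.le.trans (haA m hm)) n
  obtain ⟨y, hy⟩ : Summable fun n => A.indicator a n • e n := by
    simpa only [Set.indicator_smul_left] using ha.indicator A
  have hsum : Summable fun n => (∑ j ∈ Finset.range (b + 1), A.indicator a (n + j)) • e n := by
    simpa only [Finset.sum_smul] using
      summable_sum fun j _ => (hasSum_backwardShift_pow hB0 hBs hy j).summable
  refine hsum.of_smul_of_le_abs hδ fun n => ?_
  obtain ⟨m, hmA, hnm, hmb⟩ := hb n
  calc δ ≤ A.indicator a (n + (m - n)) := by
        rw [Nat.add_sub_cancel' hnm, Set.indicator_of_mem hmA]; exact haA m hmA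
    _ ≤ ∑ j ∈ Finset.range (b + 1), A.indicator a (n + j) :=
        Finset.single_le_sum (fun j _ => hnonneg _) (Finset.mem_range.2 (by omega))
    _ ≤ _ := le_abs_self _

theorem backward_shift_PSyn_implies_chaotic_general
    {X : Type*} [NormedAddCommGroup X] [NormedSpace ℝ X] [CompleteSpace X]
    (e : ℕ → X)
    -- (e n) is an unconditional Schauder basis: every vector has a unique
    -- unconditionally convergent expansion
    (hbasis : ∀ x : X, ∃! a : ℕ → ℝ, HasSum (fun n => a n • e n) x)
    -- B is the backward shift with respect to the basis
    (B : X →L[ℝ] X) (hB0 : B (e 0) = 0) (hBs : ∀ n, B (e (n + 1)) = e n)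
    -- B has the 𝓟_Syn property
    (hSyn : ∀ U : Set X, IsOpen U → U.Nonempty →
      ∃ x : X, Syndetic {n : ℕ | (B ^ n) x ∈ U}) :
    Summable e := by
  set U := expansionCoord hbasis 0 ⁻¹' Set.Ioi (1 / 2)
  have hU : IsOpen U := isOpen_Ioi.preimage (expansionCoord hbasis 0).continuous
  have he₀ : e 0 ∈ U := by norm_num [U, expansionCoord_apply, expansionCoeff_basis]
  obtain ⟨x, hx⟩ := hSyn U hU ⟨e 0, he₀⟩
  refine summable_of_syndetic_of_le_coeff hB0 hBs (hasSum_expansionCoeff hbasis x).summable hx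
    one_half_pos fun n hn => le_of_lt ?_
  rwa [Set.mem_ofPred_eq, Set.mem_preimage, expansionCoord_apply,
    expansionCoeff_backwardShift_pow hbasis hB0 hBs, zero_add] at hn

theorem backward_shift_PSyn_implies_chaotic
    {X : Type*} [NormedAddCommGroup X] [NormedSpace ℝ X] [CompleteSpace X]
    (e : ℕ → X) (hnorm : ∀ n, ‖e n‖ = 1)
    -- (e n) is an unconditional Schauder basis: every vector has a unique
    -- unconditionally convergent expansion
    (hbasis : ∀ x : X, ∃! a : ℕ → ℝ, HasSum (fun n => a n • e n) x)
    -- B is the backward shift with respect to the basis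
    (B : X →L[ℝ] X) (hB0 : B (e 0) = 0) (hBs : ∀ n, B (e (n + 1)) = e n)
    -- B has the 𝓟_Syn property
    (hSyn : ∀ U : Set X, IsOpen U → U.Nonempty →
      ∃ x : X, Syndetic {n : ℕ | (B ^ n) x ∈ U}) :
    Summable e :=
  backward_shift_PSyn_implies_chaotic_general e hbasis B hB0 hBs hSyn
end
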